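/- For every α ∈ [0,1/2] and every d ∈ ℕ, the d×d MA(1) matrix Λ with Λ_{ii} = 1, Λ_{ij} = α when |i−j| = 1, and Λ_{ij} = 0 when |i−j| ≥ 2, is a tail-dependence matrix. Concretely, if Z is uniform on [0,d], X_i = 1_{{Z ∈ [(i−1)(1−α), (i−1)(1−α)+1]}} for i = 1,...,d, p = 1/d, U, V are uniform on [0,1] with U, V, X independent, and Y = X·pU + (1−X)·(p + (1−p)V) componentwise, then Y has uniform [0,1] margins and its pairwise tail-dependence coefficients form the MA(1) matrix with parameter α (Proposition 4.1(iii)). -/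

import Mathlib

open MeasureTheory ProbabilityTheory Filter Set

noncomputable section

/-- A Bernoulli-compatible matrix: `B i j = E[X i * X j]` for some random vector `X`
taking values in `{0,1}^d` on some probability space. -/
def IsBernoulliCompatible {d : ℕ} (B : Matrix (Fin d) (Fin d) ℝ) : Prop :=
  ∃ (Ω : Type) (_ : MeasurableSpace Ω) (μ : Measure Ω),
    IsProbabilityMeasure μ ∧
    ∃ X : Ω → Fin d → ℝ, Measurable X ∧
      (∀ ω i, X ω i = 0 ∨ X ω i = 1) ∧
      (∀ i j, B i j = ∫ ω, X ω i * X ω j ∂μ)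

/-- The (lower) tail-dependence coefficient of `Yi` and `Yj` exists and equals `l`:
`P(Yi ≤ u, Yj ≤ u)/u → l` as `u ↓ 0`. -/
def HasTailDepCoeff {Ω : Type} [MeasurableSpace Ω] (μ : Measure Ω)
    (Yi Yj : Ω → ℝ) (l : ℝ) : Prop :=
  Filter.Tendsto (fun u : ℝ => (μ {ω | Yi ω ≤ u ∧ Yj ω ≤ u}).toReal / u)
    (nhdsWithin 0 (Set.Ioi 0)) (nhds l)

/-- The uniform distribution on `[0,1]`. -/
def stdUniform : Measure ℝ := volume.restrict (Set.Icc (0:ℝ) 1)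

/-- A tail-dependence matrix: the matrix of pairwise (lower) tail-dependence coefficients
of some random vector with standard uniform margins. -/
def IsTailDependenceMatrix {d : ℕ} (Λ : Matrix (Fin d) (Fin d) ℝ) : Prop :=
  ∃ (Ω : Type) (_ : MeasurableSpace Ω) (μ : Measure Ω),
    IsProbabilityMeasure μ ∧
    ∃ Y : Ω → Fin d → ℝ, Measurable Y ∧
      (∀ i, μ.map (fun ω => Y ω i) = stdUniform) ∧
      (∀ i j, HasTailDepCoeff μ (fun ω => Y ω i) (fun ω => Y ω j) (Λ i j))

/-!
On the event `Z ∈ S i`, of probability `p = 1/d`, the variable `Y i` is uniform on `[0, p]`, and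
off it uniform on `[p, 1]`; as `Z` is independent of `U` and `V`, this mixture is uniform on
`[0, 1]`. Below level `p` only the first branch is reachable, so for `u < p`
`P(Y i ≤ u, Y j ≤ u) = P(Z ∈ S i ∩ S j) * u / p`, and the tail coefficient is
`d * P(Z ∈ S i ∩ S j)`, the length `(1 - (1 - α) |i - j|)⁺` of the overlap of two unit intervals
at distance `(1 - α) |i - j|`; for `α ≤ 1/2` it vanishes as soon as `|i - j| ≥ 2`.
-/

lemma stdUniform_Iic (u : ℝ) : stdUniform (Iic u) = ENNReal.ofReal (min u 1) := by
  have hinter : Iic u ∩ Icc 0 1 = Icc 0 (min u 1) := by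
    ext t
    simp only [mem_inter_iff, mem_Iic, mem_Icc, le_min_iff]
    tauto
  rw [stdUniform, Measure.restrict_apply measurableSet_Iic, hinter, Real.volume_Icc, sub_zero]

lemma stdUniform_setOf_add_mul_le {a s : ℝ} (hs : 0 < s) (u : ℝ) :
    stdUniform {t | a + s * t ≤ u} = ENNReal.ofReal (min ((u - a) / s) 1) := by
  have hset : {t | a + s * t ≤ u} = Iic ((u - a) / s) := by
    ext t
    rw [mem_ofPred_eq, mem_Iic, le_div_iff₀ hs]
    constructor <;> intro <;> linarith
  rw [hset, stdUniform_Iic]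

/-- Stated with the weight `s` in front so that the degenerate case `s = 0` is included. -/
lemma ofReal_mul_stdUniform_setOf_add_mul_le (a u : ℝ) {s : ℝ} (hs : 0 ≤ s) :
    ENNReal.ofReal s * stdUniform {t | a + s * t ≤ u} = ENNReal.ofReal (min (u - a) s) := by
  rcases hs.eq_or_lt with rfl | hs
  · rw [ENNReal.ofReal_zero, zero_mul, ENNReal.ofReal_of_nonpos (min_le_right _ _)]
  · rw [stdUniform_setOf_add_mul_le hs, ← ENNReal.ofReal_mul hs.le, mul_min_of_nonneg _ _ hs.le,
      mul_div_cancel₀ _ hs.ne', mul_one]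

lemma ofReal_min_add_ofReal_min_sub {p : ℝ} (hp0 : 0 ≤ p) (hp1 : p ≤ 1) (u : ℝ) :
    ENNReal.ofReal (min u p) + ENNReal.ofReal (min (u - p) (1 - p)) =
      ENNReal.ofReal (min u 1) := by
  rcases le_total u p with hup | hpu
  · rw [ENNReal.ofReal_of_nonpos (min_le_of_left_le (sub_nonpos.2 hup)), add_zero, min_eq_left hup,
      min_eq_left (hup.trans hp1)]
  · rw [min_eq_right hpu, ← ENNReal.ofReal_add hp0 (le_min (by linarith) (by linarith)),
      ← min_add_add_left, add_sub_cancel, add_sub_cancel]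

lemma volume_Icc_add_one_inter_Icc_add_one (a b : ℝ) :
    volume (Icc a (a + 1) ∩ Icc b (b + 1)) = ENNReal.ofReal (1 - |a - b|) := by
  rw [Icc_inter_Icc, Real.volume_Icc, min_add_add_right, abs_sub_comm, ← max_sub_min_eq_abs]
  congr 1
  ring

lemma max_one_sub_abs_mul_sub_mul {α : ℝ} (hα0 : 0 ≤ α) (hα2 : α ≤ 1 / 2) (i j : ℕ) :
    max (1 - |i * (1 - α) - j * (1 - α)|) 0 =
      if i = j then 1 else if ((i : ℤ) - j).natAbs = 1 then α else 0 := by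
  have habs : |i * (1 - α) - j * (1 - α)| = (1 - α) * (((i : ℤ) - j).natAbs : ℝ) := by
    rw [← sub_mul, abs_mul, abs_of_nonneg (by linarith : (0 : ℝ) ≤ 1 - α), mul_comm,
      Nat.cast_natAbs]
    push_cast
    rfl
  rw [habs]
  split_ifs with hij hk
  · simp [hij]
  · rw [hk, Nat.cast_one, mul_one, sub_sub_cancel, max_eq_left hα0]
  · have hk2 : 2 ≤ ((i : ℤ) - j).natAbs := by omega
    have : (2 : ℝ) ≤ ((i : ℤ) - j).natAbs := by exact_mod_cast hk2
    exact max_eq_right (by nlinarith)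

lemma measure_preimage_of_map_eq_smul_restrict {Ω : Type} [MeasurableSpace Ω] {μ : Measure Ω}
    {Z : Ω → ℝ} {c : ENNReal} {K s : Set ℝ} (hZ : Measurable Z)
    (hZdist : μ.map Z = c • volume.restrict K) (hs : MeasurableSet s) (hsK : s ⊆ K) :
    μ (Z ⁻¹' s) = c * volume s := by
  rw [← Measure.map_apply hZ hs, hZdist, Measure.smul_apply, Measure.restrict_apply hs,
    inter_eq_left.2 hsK, smul_eq_mul]

section SplitUniform

variable {Ω : Type} {Z U V : Ω → ℝ} {S T : Set ℝ} {p : ℝ}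

open Classical in
def splitUniform (p : ℝ) (S : Set ℝ) (Z U V : Ω → ℝ) (ω : Ω) : ℝ :=
  if Z ω ∈ S then p * U ω else p + (1 - p) * V ω

lemma splitUniform_le_iff_of_lt {ω : Ω} {u : ℝ} (hVω : 0 ≤ V ω) (hp1 : p ≤ 1) (hu : u < p) :
    splitUniform p S Z U V ω ≤ u ↔ Z ω ∈ S ∧ 0 + p * U ω ≤ u := by
  have : u < p + (1 - p) * V ω := by nlinarith
  by_cases h : Z ω ∈ S <;> simp [splitUniform, h, this]

variable [MeasurableSpace Ω] {μ : Measure Ω}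

@[fun_prop]
lemma measurable_splitUniform (hS : MeasurableSet S) (hZ : Measurable Z) (hU : Measurable U)
    (hV : Measurable V) : Measurable (splitUniform p S Z U V) :=
  Measurable.ite (hZ hS) (measurable_const.mul hU) (measurable_const.add (measurable_const.mul hV))

/-- The `U`-branch is written `0 + p * t` so that both branches have the affine shape of
`ofReal_mul_stdUniform_setOf_add_mul_le`. -/
lemma measure_splitUniform_le (hS : MeasurableSet S) (hZ : Measurable Z) (hZU : IndepFun Z U μ)
    (hZV : IndepFun Z V μ) (u : ℝ) :
    μ {ω | splitUniform p S Z U V ω ≤ u} =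
      μ (Z ⁻¹' S) * μ (U ⁻¹' {t | 0 + p * t ≤ u}) +
        μ (Z ⁻¹' Sᶜ) * μ (V ⁻¹' {t | p + (1 - p) * t ≤ u}) := by
  have hlow : {ω | splitUniform p S Z U V ω ≤ u} ∩ Z ⁻¹' S =
      Z ⁻¹' S ∩ U ⁻¹' {t | 0 + p * t ≤ u} := by
    ext ω
    by_cases h : Z ω ∈ S <;> simp [splitUniform, h]
  have hhigh : {ω | splitUniform p S Z U V ω ≤ u} \ Z ⁻¹' S =
      Z ⁻¹' Sᶜ ∩ V ⁻¹' {t | p + (1 - p) * t ≤ u} := by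
    ext ω
    by_cases h : Z ω ∈ S <;> simp [splitUniform, h]
  have hmeas (a s : ℝ) : MeasurableSet {t : ℝ | a + s * t ≤ u} :=
    measurableSet_le (by fun_prop) measurable_const
  rw [← measure_inter_add_sdiff _ (hZ hS), hlow, hhigh,
    hZU.measure_inter_preimage_eq_mul _ _ hS (hmeas _ _),
    hZV.measure_inter_preimage_eq_mul _ _ hS.compl (hmeas _ _)]

lemma measure_splitUniform_le_and_le {u : ℝ} (hp1 : p ≤ 1) (hu : u < p) (hS : MeasurableSet S)
    (hT : MeasurableSet T) (hU : Measurable U) (hV : Measurable V) (hZU : IndepFun Z U μ)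
    (hUdist : μ.map U = stdUniform) (hVdist : μ.map V = stdUniform) :
    μ {ω | splitUniform p S Z U V ω ≤ u ∧ splitUniform p T Z U V ω ≤ u} =
      μ (Z ⁻¹' (S ∩ T)) * stdUniform {t | 0 + p * t ≤ u} := by
  have hV0 : ∀ᵐ ω ∂μ, 0 ≤ V ω := by
    refine ae_of_ae_map hV.aemeasurable ?_
    rw [hVdist]
    filter_upwards [ae_restrict_mem measurableSet_Icc] with t ht using ht.1
  have hae : {ω | splitUniform p S Z U V ω ≤ u ∧ splitUniform p T Z U V ω ≤ u} =ᵐ[μ]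
      (Z ⁻¹' (S ∩ T) ∩ U ⁻¹' {t | 0 + p * t ≤ u} : Set Ω) := by
    filter_upwards [hV0] with ω hω
    change (_ ∧ _) = (Z ω ∈ S ∩ T ∧ 0 + p * U ω ≤ u)
    apply propext
    rw [splitUniform_le_iff_of_lt hω hp1 hu, splitUniform_le_iff_of_lt hω hp1 hu, mem_inter_iff]
    tauto
  have hmeas : MeasurableSet {t : ℝ | 0 + p * t ≤ u} :=
    measurableSet_le (by fun_prop) measurable_const
  rw [measure_congr hae, hZU.measure_inter_preimage_eq_mul _ _ (hS.inter hT) hmeas,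
    ← Measure.map_apply hU hmeas, hUdist]

lemma hasTailDepCoeff_splitUniform (hp0 : 0 < p) (hp1 : p ≤ 1) (hS : MeasurableSet S)
    (hT : MeasurableSet T) (hU : Measurable U) (hV : Measurable V) (hZU : IndepFun Z U μ)
    (hUdist : μ.map U = stdUniform) (hVdist : μ.map V = stdUniform) :
    HasTailDepCoeff μ (splitUniform p S Z U V) (splitUniform p T Z U V)
      ((μ (Z ⁻¹' (S ∩ T))).toReal / p) := by
  refine tendsto_const_nhds.congr' ?_
  filter_upwards [Ioo_mem_nhdsGT hp0] with u ⟨hu0, hup⟩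
  rw [measure_splitUniform_le_and_le hp1 hup hS hT hU hV hZU hUdist hVdist,
    stdUniform_setOf_add_mul_le hp0, min_eq_left ((div_le_one hp0).2 (by linarith)), sub_zero,
    ENNReal.toReal_mul, ENNReal.toReal_ofReal (by positivity)]
  field_simp

lemma map_splitUniform [IsProbabilityMeasure μ] (hp0 : 0 ≤ p) (hp1 : p ≤ 1)
    (hS : MeasurableSet S) (hZ : Measurable Z) (hU : Measurable U) (hV : Measurable V)
    (hZU : IndepFun Z U μ) (hZV : IndepFun Z V μ)
    (hZS : μ (Z ⁻¹' S) = ENNReal.ofReal p) (hUdist : μ.map U = stdUniform)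
    (hVdist : μ.map V = stdUniform) :
    μ.map (splitUniform p S Z U V) = stdUniform := by
  have hZSc : μ (Z ⁻¹' Sᶜ) = ENNReal.ofReal (1 - p) := by
    rw [preimage_compl, prob_compl_eq_one_sub (hZ hS), hZS, ENNReal.ofReal_sub _ hp0,
      ENNReal.ofReal_one]
  have hmeas (a s u : ℝ) : MeasurableSet {t : ℝ | a + s * t ≤ u} :=
    measurableSet_le (by fun_prop) measurable_const
  have : IsProbabilityMeasure (μ.map (splitUniform p S Z U V)) :=
    Measure.isProbabilityMeasure_map (measurable_splitUniform hS hZ hU hV).aemeasurable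
  refine Measure.ext_of_Iic _ _ fun u => ?_
  rw [Measure.map_apply (measurable_splitUniform hS hZ hU hV) measurableSet_Iic]
  change μ {ω | splitUniform p S Z U V ω ≤ u} = _
  rw [measure_splitUniform_le hS hZ hZU hZV, hZS, hZSc,
    ← Measure.map_apply hU (hmeas _ _ _), ← Measure.map_apply hV (hmeas _ _ _), hUdist, hVdist,
    ofReal_mul_stdUniform_setOf_add_mul_le _ _ hp0,
    ofReal_mul_stdUniform_setOf_add_mul_le _ _ (sub_nonneg.2 hp1), sub_zero,
    ofReal_min_add_ofReal_min_sub hp0 hp1, stdUniform_Iic]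

end SplitUniform

/-- Proposition 4.1(iii): the MA(1) matrix with parameter `α ∈ [0,1/2]` is a tail-dependence
matrix; concretely, if `Z` is uniform on `[0,d]`,
`X i = 1_{Z ∈ [(i-1)(1-α), (i-1)(1-α)+1]}`, `p = 1/d`, `U, V` standard uniform with
`Z, U, V` independent and `Y i = X i * (p U) + (1 - X i) * (p + (1-p) V)`, then `Y` has
standard uniform margins and its pairwise tail-dependence coefficients form the MA(1)
matrix. -/
theorem ma1_tail_dependence {d : ℕ} (α : ℝ) (hα : α ∈ Set.Icc (0:ℝ) (1/2))
    (Ω : Type) [MeasurableSpace Ω] (μ : Measure Ω) [IsProbabilityMeasure μ]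
    (Z U V : Ω → ℝ)
    (hZmeas : Measurable Z) (hUmeas : Measurable U) (hVmeas : Measurable V)
    (hZ : μ.map Z = ((d : ENNReal))⁻¹ • volume.restrict (Set.Icc (0:ℝ) (d : ℝ)))
    (hU : μ.map U = stdUniform) (hV : μ.map V = stdUniform)
    (hindep : ProbabilityTheory.iIndepFun ![Z, U, V] μ)
    (X : Ω → Fin d → ℝ)
    (hX : ∀ ω i, X ω i =
      if (i.val : ℝ) * (1 - α) ≤ Z ω ∧ Z ω ≤ (i.val : ℝ) * (1 - α) + 1 then 1 else 0)
    (Y : Ω → Fin d → ℝ)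
    (hY : ∀ ω i, Y ω i =
      X ω i * ((1 / d : ℝ) * U ω) + (1 - X ω i) * ((1 / d : ℝ) + (1 - (1 / d : ℝ)) * V ω)) :
    (∀ i, μ.map (fun ω => Y ω i) = stdUniform) ∧
    (∀ i j, HasTailDepCoeff μ (fun ω => Y ω i) (fun ω => Y ω j)
      (if i = j then 1 else if ((i.val : ℤ) - (j.val : ℤ)).natAbs = 1 then α else 0)) ∧
    IsTailDependenceMatrix (Matrix.of fun i j : Fin d =>
      if i = j then (1:ℝ) else if ((i.val : ℤ) - (j.val : ℤ)).natAbs = 1 then α else 0) := by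
  obtain ⟨hα0, hα2⟩ := hα
  have hd : 0 < d := by
    by_contra! hd0
    have h : μ.map Z univ = 1 := by simp [Measure.map_apply hZmeas MeasurableSet.univ]
    rw [hZ, Nat.le_zero.1 hd0] at h
    simp at h
  set p : ℝ := 1 / d with hp
  have hp0 : 0 < p := by positivity
  have hp1 : p ≤ 1 := by rw [hp, div_le_one (by positivity)]; exact_mod_cast hd
  set S : Fin d → Set ℝ := fun i => Icc (i * (1 - α)) (i * (1 - α) + 1)
  have hSsub (i : Fin d) : S i ⊆ Icc 0 d := by
    have hi : (i : ℝ) + 1 ≤ d := by exact_mod_cast i.isLt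
    exact Icc_subset_Icc (mul_nonneg (Nat.cast_nonneg _) (by linarith)) (by nlinarith)
  have hYS (i : Fin d) : (fun ω => Y ω i) = splitUniform p (S i) Z U V := by
    ext ω
    rw [hY, hX]
    simp only [splitUniform, S, mem_Icc]
    split_ifs <;> ring
  have hZU : IndepFun Z U μ := hindep.indepFun (by decide : (0 : Fin 3) ≠ 1)
  have hZV : IndepFun Z V μ := hindep.indepFun (by decide : (0 : Fin 3) ≠ 2)
  have hZS (i j : Fin d) : μ (Z ⁻¹' (S i ∩ S j)) =
      ENNReal.ofReal p * ENNReal.ofReal (1 - |i * (1 - α) - j * (1 - α)|) := by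
    rw [measure_preimage_of_map_eq_smul_restrict hZmeas hZ (measurableSet_Icc.inter
      measurableSet_Icc) (inter_subset_left.trans (hSsub i)),
      volume_Icc_add_one_inter_Icc_add_one, hp, one_div, ENNReal.ofReal_inv_of_pos (by positivity),
      ENNReal.ofReal_natCast]
  have hmarg (i : Fin d) : μ.map (fun ω => Y ω i) = stdUniform := by
    rw [hYS]
    exact map_splitUniform hp0.le hp1 measurableSet_Icc hZmeas hUmeas hVmeas hZU hZV
      (by simpa using hZS i i) hU hV
  have hcoef (i j : Fin d) : HasTailDepCoeff μ (fun ω => Y ω i) (fun ω => Y ω j)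
      (if i = j then 1 else if ((i.val : ℤ) - (j.val : ℤ)).natAbs = 1 then α else 0) := by
    rw [hYS, hYS]
    convert hasTailDepCoeff_splitUniform hp0 hp1 measurableSet_Icc measurableSet_Icc hUmeas hVmeas
      hZU hU hV using 1
    rw [hZS, ENNReal.toReal_mul, ENNReal.toReal_ofReal hp0.le, ENNReal.toReal_ofReal',
      mul_div_cancel_left₀ _ hp0.ne', max_one_sub_abs_mul_sub_mul hα0 hα2]
    simp only [Fin.val_inj]
  refine ⟨hmarg, hcoef, Ω, _, μ, inferInstance, Y, measurable_pi_lambda _ fun i => ?_, hmarg, hcoef⟩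
  rw [hYS]
  exact measurable_splitUniform measurableSet_Icc hZmeas hUmeas hVmeas
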